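/- Density of end-inclusion of finite prefix codes: let P, Q ⊂ A* be finite prefix codes such that ends(QA*) is a proper subset of ends(PA*). Then there exists a finite set D ⊂ A* such that ends(QA*) ⊊ ends(DA*) ⊊ ends(PA*). -/

import Mathlib

/-- `R` is a right ideal of the free monoid `A*` (words = `List A`). -/
def IsRightIdeal {A : Type*} (R : Set (List A)) : Prop :=
  ∀ r ∈ R, ∀ w : List A, r ++ w ∈ R

/-- The right ideal `S·A*` generated by a set of words `S`. -/
def setIdeal {A : Type*} (S : Set (List A)) : Set (List A) :=
  {l | ∃ s ∈ S, ∃ w : List A, l = s ++ w}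

/-- The set of ends (infinite words) having some finite prefix in `R`. -/
def ends {A : Type*} (R : Set (List A)) : Set (ℕ → A) :=
  {z | ∃ n : ℕ, (List.ofFn fun i : Fin n => z i) ∈ R}

/-- A prefix code: no element is a proper prefix of another. -/
def IsPrefixCode {A : Type*} (P : Set (List A)) : Prop :=
  ∀ p ∈ P, ∀ q ∈ P, p <+: q → p = q

private def pref {A : Type*} (z : ℕ → A) (n : ℕ) : List A := (List.range n).map z

private lemma ofFn_eq_pref {A : Type*} (z : ℕ → A) (n : ℕ) :
    (List.ofFn fun i : Fin n => z i) = pref z n := by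
  apply List.ext_getElem <;> simp [pref]

private lemma pref_length {A : Type*} (z : ℕ → A) (n : ℕ) : (pref z n).length = n := by
  simp [pref]

private lemma pref_take {A : Type*} (z : ℕ → A) {m n : ℕ} (h : m ≤ n) :
    (pref z n).take m = pref z m := by
  rw [pref, pref, ← List.map_take, List.take_range, Nat.min_eq_left h]

private lemma pref_getD {A : Type*} (z : ℕ → A) {n i : ℕ} (h : i < n) (d : A) :
    (pref z n).getD i d = z i := by
  rw [List.getD_eq_getElem _ _ (by simpa [pref] using h)]
  simp [pref, h]

private lemma pref_congr {A : Type*} {z y : ℕ → A} {n : ℕ} (h : ∀ i < n, z i = y i) :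
    pref z n = pref y n := by
  apply List.ext_getElem (by simp [pref])
  intro i h1 h2
  simp only [pref, List.getElem_map, List.getElem_range]
  exact h i (by simpa [pref] using h1)

private lemma mem_ends_iff {A : Type*} (S : Set (List A)) (z : ℕ → A) :
    z ∈ ends (setIdeal S) ↔ ∃ s ∈ S, s = pref z s.length := by
  constructor
  · rintro ⟨n, hn⟩
    rw [ofFn_eq_pref] at hn
    obtain ⟨s, hs, w, hw⟩ := hn
    refine ⟨s, hs, ?_⟩
    have hlen : s.length ≤ n := by
      have := congrArg List.length hw
      simp [pref_length] at this
      omega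
    calc s = (s ++ w).take s.length := List.take_left.symm
    _ = (pref z n).take s.length := by rw [← hw]
    _ = pref z s.length := pref_take z hlen
  · rintro ⟨s, hs, hpre⟩
    exact ⟨s.length, by rw [ofFn_eq_pref, ← hpre]; exact ⟨s, hs, [], by simp⟩⟩

private lemma ends_mono {A : Type*} {S T : Set (List A)} (h : S ⊆ T) :
    ends (setIdeal S) ⊆ ends (setIdeal T) := by
  intro z hz
  rw [mem_ends_iff] at hz ⊢
  obtain ⟨s, hs, h1⟩ := hz
  exact ⟨s, h hs, h1⟩

theorem density_of_end_inclusion {A : Type*} [Fintype A] (hA : 2 ≤ Fintype.card A)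
    (P Q : Finset (List A))
    (hP : IsPrefixCode (P : Set (List A))) (hQ : IsPrefixCode (Q : Set (List A)))
    (h : ends (setIdeal (Q : Set (List A))) ⊂ ends (setIdeal (P : Set (List A)))) :
    ∃ D : Finset (List A),
      ends (setIdeal (Q : Set (List A))) ⊂ ends (setIdeal (D : Set (List A))) ∧
      ends (setIdeal (D : Set (List A))) ⊂ ends (setIdeal (P : Set (List A))) := by
  classical
  obtain ⟨hsub, hne⟩ := h
  obtain ⟨z, hzP, hzQ⟩ := Set.not_subset.mp hne
  rw [mem_ends_iff] at hzP
  obtain ⟨p, hpP, hp⟩ := hzP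
  set N : ℕ := max p.length (Q.sup List.length) with hN
  set w : List A := pref z (N + 1) with hw
  have hwlen : w.length = N + 1 := by rw [hw, pref_length]
  have hpN : p.length ≤ N + 1 := le_trans (le_max_left _ _) (Nat.le_succ N)
  refine ⟨insert w Q, ⟨ends_mono (by simp), ?_⟩, ?_, ?_⟩
  · -- not ends(D) ⊆ ends(Q), witness z
    intro hcon
    apply hzQ
    apply hcon
    rw [mem_ends_iff]
    exact ⟨w, by simp, by rw [hwlen, hw]⟩
  · -- ends(D) ⊆ ends(P)
    intro y hy
    rw [mem_ends_iff] at hy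
    obtain ⟨s, hs, hsy⟩ := hy
    simp only [Finset.coe_insert, Set.mem_insert_iff] at hs
    rcases hs with hs' | hsQ
    · -- s = w
      subst hs'
      rw [hwlen] at hsy
      rw [mem_ends_iff]
      refine ⟨p, hpP, ?_⟩
      calc p = w.take p.length := by rw [hw, pref_take z hpN, ← hp]
      _ = (pref y (N + 1)).take p.length := by rw [← hsy]
      _ = pref y p.length := pref_take y hpN
    · exact hsub (by rw [mem_ends_iff]; exact ⟨s, hsQ, hsy⟩)
  · -- not ends(P) ⊆ ends(D), witness z'
    obtain ⟨a, ha⟩ := Fintype.exists_ne_of_one_lt_card (by omega) (z N)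
    set z' : ℕ → A := fun i => if i < N then z i else a with hz'
    have hagree : ∀ i < N, z i = z' i := by
      intro i hi; simp [hz', hi]
    intro hcon
    have hz'P : z' ∈ ends (setIdeal (P : Set (List A))) := by
      rw [mem_ends_iff]
      refine ⟨p, hpP, ?_⟩
      calc p = pref z p.length := hp
      _ = pref z' p.length := pref_congr fun i hi => hagree i (lt_of_lt_of_le hi (le_max_left _ _))
    have hz'D := hcon hz'P
    rw [mem_ends_iff] at hz'D
    obtain ⟨s, hs, hsy⟩ := hz'D
    simp only [Finset.coe_insert, Set.mem_insert_iff] at hs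
    rcases hs with hs' | hsQ
    · -- w = pref z' (N+1), contradiction at index N
      subst hs'
      rw [hwlen] at hsy
      have heq : pref z (N + 1) = pref z' (N + 1) := by rw [← hw, hsy]
      have h1 := congrArg (fun l => l.getD N a) heq
      simp only [pref_getD _ (Nat.lt_succ_self N)] at h1
      rw [hz'] at h1
      simp only [lt_self_iff_false, if_false] at h1
      exact ha h1.symm
    · -- s ∈ Q: then z ∈ ends Q, contradiction
      apply hzQ
      rw [mem_ends_iff]
      refine ⟨s, hsQ, ?_⟩
      have hsN : s.length ≤ N := le_trans (Finset.le_sup hsQ) (le_max_right _ _)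
      calc s = pref z' s.length := hsy
      _ = pref z s.length := (pref_congr fun i hi => hagree i (lt_of_lt_of_le hi hsN)).symm
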